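/- Let A and B be ε-quasiconvex subgroups of a δ-hyperbolic group G (with respect to a finite symmetrized generating set 𝒜). There exists a constant C_2, depending only on G, δ and ε, with the following property: for any quasiconvex subgroups A' ≤ A and B' ≤ B with A' ∩ B' = A ∩ B, if every element of A' and of B' of word length less than C_2 belongs to A ∩ B, then the subgroup ⟨A', B'⟩ generated by A' and B' is quasiconvex in G. -/

import Mathlib

open scoped Pointwise

/-- `S` is a finite symmetrized generating set of the group `G`. -/
def IsSymmGenSet {G : Type*} [Group G] (S : Set G) : Prop :=
  S.Finite ∧ S⁻¹ = S ∧ Subgroup.closure S = ⊤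

/-- The word length of `g` with respect to the generating set `S`: the length of a
shortest word over `S` representing `g`. -/
noncomputable def wordLength {G : Type*} [Group G] (S : Set G) (g : G) : ℕ :=
  sInf {n : ℕ | ∃ f : Fin n → G, (∀ i, f i ∈ S) ∧ (List.ofFn f).prod = g}

/-- The left-invariant word metric `d(x,y) = |x⁻¹y|_G` on `G`. -/
noncomputable def wordDist {G : Type*} [Group G] (S : Set G) (x y : G) : ℕ :=
  wordLength S (x⁻¹ * y)

/-- The Gromov product `(x|y)_w = (d(x,w)+d(y,w)-d(x,y))/2`. -/
noncomputable def gromovProd {G : Type*} [Group G] (S : Set G) (x y w : G) : ℝ :=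
  ((wordDist S w x : ℝ) + (wordDist S w y : ℝ) - (wordDist S x y : ℝ)) / 2

/-- A discrete geodesic from `u` to `v` in the Cayley graph `Γ(G,S)`: a sequence of
vertices `p 0 = u, ..., p (d(u,v)) = v` with `d(p i, p j) = j - i`. -/
def IsGeodesic {G : Type*} [Group G] (S : Set G) (u v : G) (p : ℕ → G) : Prop :=
  p 0 = u ∧ p (wordDist S u v) = v ∧
    ∀ i j : ℕ, i ≤ j → j ≤ wordDist S u v → wordDist S (p i) (p j) = j - i

/-- A subset `Q ⊆ G` is `ε`-quasiconvex if every geodesic between two elements of `Q`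
lies in the closed `ε`-neighborhood of `Q`. -/
def IsQuasiconvex {G : Type*} [Group G] (S : Set G) (ε : ℝ) (Q : Set G) : Prop :=
  ∀ u ∈ Q, ∀ v ∈ Q, ∀ p : ℕ → G, IsGeodesic S u v p →
    ∀ i ≤ wordDist S u v, ∃ q ∈ Q, (wordDist S (p i) q : ℝ) ≤ ε

/-- All geodesic triangles in `Γ(G,S)` are `δ`-thin: two points on the sides of a
geodesic triangle, equidistant from a common vertex (within the Gromov product),
are at distance at most `δ` from each other. -/
def ThinTriangles {G : Type*} [Group G] (S : Set G) (δ : ℝ) : Prop :=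
  ∀ a b c : G, ∀ p q : ℕ → G, IsGeodesic S a b p → IsGeodesic S a c q →
    ∀ i : ℕ, (i : ℝ) ≤ gromovProd S b c a → (wordDist S (p i) (q i) : ℝ) ≤ δ

/-- The profinite topology on `G`: cosets of finite index normal subgroups form a
basis of open sets (equivalently, a basis of neighborhoods of the identity). -/
def profiniteTopology (G : Type*) [Group G] : TopologicalSpace G :=
  TopologicalSpace.generateFrom
    {U : Set G | ∃ (g : G) (N : Subgroup G), N.Normal ∧ N.FiniteIndex ∧ U = g • (N : Set G)}

/-- A subset of `G` is separable if it is closed in the profinite topology on `G`. -/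
def SeparableSubset (G : Type*) [Group G] (P : Set G) : Prop :=
  @IsClosed G (profiniteTopology G) P

/-- A word hyperbolic group `G` (with finite symmetrized generating set `S`) is GFERF
if every quasiconvex subgroup of `G` is separable. -/
def GFERF {G : Type*} [Group G] (S : Set G) : Prop :=
  ∀ H : Subgroup G, (∃ ε : ℝ, 0 ≤ ε ∧ IsQuasiconvex S ε (H : Set G)) →
    SeparableSubset G (H : Set G)

/-- A `(λ,c)`-quasigeodesic path of length `n` in the Cayley graph `Γ(G,S)`:
consecutive vertices are adjacent and every subpath `p|_{[i,j]}` satisfies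
`λ(j-i) - c ≤ d(p i, p j)`. -/
def IsQuasigeodesicOn {G : Type*} [Group G] (S : Set G) (lam c : ℝ) (p : ℕ → G) (n : ℕ) : Prop :=
  (∀ i < n, wordDist S (p i) (p (i + 1)) = 1) ∧
    ∀ i j : ℕ, i ≤ j → j ≤ n → lam * ((j : ℝ) - (i : ℝ)) - c ≤ (wordDist S (p i) (p j) : ℝ)

namespace GitikAux

variable {G : Type*} [Group G] (S : Set G)

/-- alternative characterization via lists -/
lemma wordLength_set_eq (g : G) :
    {n : ℕ | ∃ f : Fin n → G, (∀ i, f i ∈ S) ∧ (List.ofFn f).prod = g}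
      = {n : ℕ | ∃ l : List G, (∀ x ∈ l, x ∈ S) ∧ l.prod = g ∧ l.length = n} := by
  ext n
  constructor
  · rintro ⟨f, hf, hprod⟩
    refine ⟨List.ofFn f, ?_, hprod, by simp⟩
    intro x hx
    obtain ⟨i, rfl⟩ := List.mem_ofFn.mp hx
    exact hf i
  · rintro ⟨l, hl, hprod, rfl⟩
    refine ⟨l.get, fun i => hl _ (l.get_mem _), ?_⟩
    rw [List.ofFn_get]
    exact hprod

lemma wordLength_le {g : G} {l : List G} (hl : ∀ x ∈ l, x ∈ S) (hprod : l.prod = g) :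
    wordLength S g ≤ l.length := by
  apply Nat.sInf_le
  rw [wordLength_set_eq]
  exact ⟨l, hl, hprod, rfl⟩

lemma wordLength_one : wordLength S (1 : G) = 0 :=
  Nat.le_zero.mp (wordLength_le S (l := []) (by simp) (by simp))

lemma exists_rep (hS : IsSymmGenSet S) (g : G) :
    ∃ l : List G, (∀ x ∈ l, x ∈ S) ∧ l.prod = g := by
  have hg : g ∈ Subgroup.closure S := by rw [hS.2.2]; trivial
  refine Subgroup.closure_induction ?_ ?_ ?_ ?_ hg
  · intro x hx; exact ⟨[x], by simpa using hx, by simp⟩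
  · exact ⟨[], by simp, by simp⟩
  · rintro x y _ _ ⟨l1, h1, p1⟩ ⟨l2, h2, p2⟩
    exact ⟨l1 ++ l2, by
      intro x hx
      rcases List.mem_append.mp hx with h | h
      exacts [h1 x h, h2 x h], by simp [p1, p2]⟩
  · rintro x _ ⟨l, hl, pl⟩
    refine ⟨(l.map (·⁻¹)).reverse, ?_, ?_⟩
    · intro y hy
      simp only [List.mem_reverse, List.mem_map] at hy
      obtain ⟨z, hz, rfl⟩ := hy
      have : z⁻¹ ∈ S⁻¹ := by simpa using hl z hz
      rwa [hS.2.1] at this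
    · rw [← pl, ← List.prod_inv_reverse]

lemma wordLength_spec (hS : IsSymmGenSet S) (g : G) :
    ∃ l : List G, (∀ x ∈ l, x ∈ S) ∧ l.prod = g ∧ l.length = wordLength S g := by
  have hne : {n : ℕ | ∃ f : Fin n → G, (∀ i, f i ∈ S) ∧ (List.ofFn f).prod = g}.Nonempty := by
    obtain ⟨l, hl, hp⟩ := exists_rep S hS g
    rw [wordLength_set_eq]
    exact ⟨l.length, l, hl, hp, rfl⟩
  have h2 := Nat.sInf_mem hne
  rw [wordLength_set_eq] at h2
  obtain ⟨l, hl, hp, hlen⟩ := h2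
  refine ⟨l, hl, hp, ?_⟩
  rw [hlen, wordLength, wordLength_set_eq]

lemma wordLength_mul_le (hS : IsSymmGenSet S) (g h : G) :
    wordLength S (g * h) ≤ wordLength S g + wordLength S h := by
  obtain ⟨l1, h1, p1, n1⟩ := wordLength_spec S hS g
  obtain ⟨l2, h2, p2, n2⟩ := wordLength_spec S hS h
  have := wordLength_le S (l := l1 ++ l2) (g := g * h)
    (by intro x hx; rcases List.mem_append.mp hx with hx | hx; exacts [h1 x hx, h2 x hx])
    (by simp [p1, p2])
  simpa [n1, n2] using this

lemma wordLength_inv_le (hS : IsSymmGenSet S) (g : G) :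
    wordLength S g⁻¹ ≤ wordLength S g := by
  obtain ⟨l, hl, pl, nl⟩ := wordLength_spec S hS g
  have := wordLength_le S (l := (l.map (·⁻¹)).reverse) (g := g⁻¹)
    (by
      intro y hy
      simp only [List.mem_reverse, List.mem_map] at hy
      obtain ⟨z, hz, rfl⟩ := hy
      have : z⁻¹ ∈ S⁻¹ := by simpa using hl z hz
      rwa [hS.2.1] at this)
    (by rw [← pl, ← List.prod_inv_reverse])
  simpa [nl] using this

lemma wordLength_inv (hS : IsSymmGenSet S) (g : G) :
    wordLength S g⁻¹ = wordLength S g := by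
  refine le_antisymm (wordLength_inv_le S hS g) ?_
  have := wordLength_inv_le S hS g⁻¹
  simpa using this

lemma wordDist_self (x : G) : wordDist S x x = 0 := by
  simp [wordDist, wordLength_one]

lemma wordDist_symm (hS : IsSymmGenSet S) (x y : G) :
    wordDist S x y = wordDist S y x := by
  rw [wordDist, wordDist, ← wordLength_inv S hS]
  simp

lemma wordDist_triangle (hS : IsSymmGenSet S) (x y z : G) :
    wordDist S x z ≤ wordDist S x y + wordDist S y z := by
  have := wordLength_mul_le S hS (x⁻¹ * y) (y⁻¹ * z)
  simpa [wordDist, mul_assoc] using this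

lemma wordDist_left (g x y : G) : wordDist S (g * x) (g * y) = wordDist S x y := by
  simp [wordDist, mul_assoc]

lemma wordDist_one_left (g : G) : wordDist S 1 g = wordLength S g := by
  simp [wordDist]

/-- existence of geodesics -/
lemma exists_geodesic (hS : IsSymmGenSet S) (u v : G) :
    ∃ p : ℕ → G, IsGeodesic S u v p := by
  obtain ⟨l, hl, hp, hn⟩ := wordLength_spec S hS (u⁻¹ * v)
  set n := wordDist S u v with hdn
  have hln : l.length = n := hn
  refine ⟨fun i => u * (l.take i).prod, by simp, ?_, ?_⟩
  · show u * (l.take (wordDist S u v)).prod = v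
    have h3 : l.take n = l := by rw [← hln]; exact List.take_length
    rw [← hdn, h3, hp]
    simp
  · intro i j hij hjn
    show wordDist S (u * (l.take i).prod) (u * (l.take j).prod) = j - i
    -- upper bound
    have key : ∀ a b : ℕ, a ≤ b → b ≤ n →
        wordDist S (u * (l.take a).prod) (u * (l.take b).prod) ≤ b - a := by
      intro a b hab hbn
      rw [wordDist_left]
      have hsplit : l.take b = l.take a ++ (l.drop a).take (b - a) := by
        rw [← List.take_add]
        congr 1
        omega
      have : (l.take a).prod⁻¹ * (l.take b).prod = ((l.drop a).take (b - a)).prod := by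
        rw [hsplit, List.prod_append]
        group
      rw [wordDist, this]
      calc wordLength S ((l.drop a).take (b-a)).prod ≤ ((l.drop a).take (b-a)).length :=
            wordLength_le S (fun x hx => hl x (List.mem_of_mem_drop (List.mem_of_mem_take hx))) rfl
        _ ≤ b - a := by simp
    have h1 : wordDist S (u * (l.take i).prod) (u * (l.take j).prod) ≤ j - i := key i j hij hjn
    -- lower bound
    have h2 : n ≤ i + (wordDist S (u * (l.take i).prod) (u * (l.take j).prod)) + (n - j) := by
      have ha : wordDist S u (u * (l.take i).prod) ≤ i := by
        have := key 0 i (Nat.zero_le i) (le_trans hij hjn)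
        simpa using this
      have hb : wordDist S (u * (l.take j).prod) v ≤ n - j := by
        have := key j n hjn (le_refl n)
        have hv : u * (l.take n).prod = v := by
          have h4 : l.take n = l := by rw [← hln]; exact List.take_length
          rw [h4, hp]; simp
        rwa [hv] at this
      calc n = wordDist S u v := rfl
        _ ≤ wordDist S u (u * (l.take i).prod) +
            wordDist S (u * (l.take i).prod) (u * (l.take j).prod) +
            wordDist S (u * (l.take j).prod) v := by
              have t1 := wordDist_triangle S hS u (u * (l.take i).prod) (u * (l.take j).prod)
              have t2 := wordDist_triangle S hS u (u * (l.take j).prod) v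
              omega
        _ ≤ i + wordDist S (u * (l.take i).prod) (u * (l.take j).prod) + (n - j) := by
              omega
    omega

lemma gp_nonneg (hS : IsSymmGenSet S) (x y w : G) : 0 ≤ gromovProd S x y w := by
  have h1 := wordDist_triangle S hS x w y
  have h2 := wordDist_symm S hS x w
  rw [gromovProd]
  have h1' : (wordDist S x y : ℝ) ≤ wordDist S x w + wordDist S w y := by exact_mod_cast h1
  have h2' : (wordDist S x w : ℝ) = wordDist S w x := by exact_mod_cast h2
  linarith

lemma gp_le_left (hS : IsSymmGenSet S) (x y w : G) :
    gromovProd S x y w ≤ (wordDist S w x : ℝ) := by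
  have h1 := wordDist_triangle S hS w x y
  have h1' : (wordDist S w y : ℝ) ≤ wordDist S w x + wordDist S x y := by exact_mod_cast h1
  rw [gromovProd]; linarith

lemma gp_comm (hS : IsSymmGenSet S) (x y w : G) :
    gromovProd S x y w = gromovProd S y x w := by
  rw [gromovProd, gromovProd, wordDist_symm S hS x y]
  ring

lemma gp_identity (hS : IsSymmGenSet S) (x z w : G) :
    gromovProd S x z w + gromovProd S x w z = (wordDist S w z : ℝ) := by
  rw [gromovProd, gromovProd]
  have h1 : (wordDist S z x : ℝ) = wordDist S x z := by exact_mod_cast wordDist_symm S hS z x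
  have h2 : (wordDist S z w : ℝ) = wordDist S w z := by exact_mod_cast wordDist_symm S hS z w
  have h3 : (wordDist S x w : ℝ) = wordDist S w x := by exact_mod_cast wordDist_symm S hS x w
  linarith

lemma gp_self_left (x w : G) : gromovProd S x x w = (wordDist S w x : ℝ) := by
  rw [gromovProd, wordDist_self]
  push_cast
  ring

lemma gp_base (x y : G) : gromovProd S x y x = 0 := by
  rw [gromovProd, wordDist_self]
  push_cast
  ring

lemma gp_left_invariant (g x y w : G) :
    gromovProd S (g * x) (g * y) (g * w) = gromovProd S x y w := by
  rw [gromovProd, gromovProd, wordDist_left, wordDist_left, wordDist_left]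

/-- distance along a geodesic, real version -/
lemma geodesic_dist_real {u v : G} {p : ℕ → G} (hp : IsGeodesic S u v p)
    {i j : ℕ} (hij : i ≤ j) (hj : j ≤ wordDist S u v) :
    (wordDist S (p i) (p j) : ℝ) = (j : ℝ) - i := by
  rw [hp.2.2 i j hij hj]
  exact_mod_cast Nat.cast_sub (R := ℝ) hij

/-- distance from a geodesic point to the far endpoint -/
lemma geodesic_to_end {u v : G} {p : ℕ → G} (hp : IsGeodesic S u v p)
    {i : ℕ} (hi : i ≤ wordDist S u v) :
    (wordDist S (p i) v : ℝ) = (wordDist S u v : ℝ) - i := by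
  have := geodesic_dist_real S hp hi (le_refl (wordDist S u v))
  rwa [hp.2.1] at this

/-- four point inequality with constant δ + 1 -/
lemma four_point (hS : IsSymmGenSet S) {δ : ℝ} (hδ : 0 ≤ δ) (hhyp : ThinTriangles S δ)
    (w x y z : G) :
    min (gromovProd S x y w) (gromovProd S y z w) - (δ + 1) ≤ gromovProd S x z w := by
  set μ := min (gromovProd S x y w) (gromovProd S y z w) with hμ
  have hμ0 : 0 ≤ μ := le_min (gp_nonneg S hS x y w) (gp_nonneg S hS y z w)
  set i := Nat.floor μ with hi
  have hiμ : (i : ℝ) ≤ μ := Nat.floor_le hμ0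
  have hμi : μ ≤ i + 1 := le_of_lt (Nat.lt_floor_add_one μ)
  obtain ⟨p, hp⟩ := exists_geodesic S hS w x
  obtain ⟨q, hq⟩ := exists_geodesic S hS w y
  obtain ⟨r, hr⟩ := exists_geodesic S hS w z
  have h1 : (wordDist S (p i) (q i) : ℝ) ≤ δ :=
    hhyp w x y p q hp hq i (le_trans hiμ (min_le_left _ _))
  have h2 : (wordDist S (q i) (r i) : ℝ) ≤ δ :=
    hhyp w y z q r hq hr i (le_trans hiμ (min_le_right _ _))
  have hix : i ≤ wordDist S w x := by
    have := le_trans hiμ (le_trans (min_le_left _ _) (gp_le_left S hS x y w))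
    exact_mod_cast this
  have hiz : i ≤ wordDist S w z := by
    have h3 : gromovProd S y z w ≤ (wordDist S w z : ℝ) := by
      rw [gp_comm S hS]
      exact gp_le_left S hS z y w
    have := le_trans hiμ (le_trans (min_le_right _ _) h3)
    exact_mod_cast this
  have hpx : (wordDist S (p i) x : ℝ) = (wordDist S w x : ℝ) - i :=
    geodesic_to_end S hp hix
  have hrz : (wordDist S (r i) z : ℝ) = (wordDist S w z : ℝ) - i :=
    geodesic_to_end S hr hiz
  have htri : (wordDist S x z : ℝ) ≤ (wordDist S x (p i) : ℝ) + (wordDist S (p i) (q i) : ℝ)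
      + (wordDist S (q i) (r i) : ℝ) + (wordDist S (r i) z : ℝ) := by
    have t1 := wordDist_triangle S hS x (p i) (q i)
    have t2 := wordDist_triangle S hS x (q i) (r i)
    have t3 := wordDist_triangle S hS x (r i) z
    have : wordDist S x z ≤ wordDist S x (p i) + wordDist S (p i) (q i)
        + wordDist S (q i) (r i) + wordDist S (r i) z := by omega
    exact_mod_cast this
  have hxpi : (wordDist S x (p i) : ℝ) = (wordDist S w x : ℝ) - i := by
    rw [show wordDist S x (p i) = wordDist S (p i) x from wordDist_symm S hS _ _]
    exact hpx
  rw [gromovProd]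
  have : (wordDist S x z : ℝ) ≤ ((wordDist S w x : ℝ) - i) + δ + δ + ((wordDist S w z : ℝ) - i) := by
    rw [← hxpi, ← hrz]
    linarith
  have goal : (i : ℝ) - δ ≤ ((wordDist S w x : ℝ) + (wordDist S w z : ℝ) - (wordDist S x z : ℝ)) / 2 := by
    linarith
  calc μ - (δ + 1) ≤ (i : ℝ) - δ := by linarith
    _ ≤ _ := goal

/-- a point with small Gromov product w.r.t. the endpoints is close to the geodesic -/
lemma near_geodesic (hS : IsSymmGenSet S) {δ : ℝ} (hhyp : ThinTriangles S δ)
    (x u v : G) {r : ℕ → G} (hr : IsGeodesic S u v r) :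
    ∃ j, j ≤ wordDist S u v ∧
      (wordDist S x (r j) : ℝ) ≤ gromovProd S u v x + δ + 1 := by
  set j := Nat.floor (gromovProd S v x u) with hj
  have h0 : 0 ≤ gromovProd S v x u := gp_nonneg S hS v x u
  have hjle : (j : ℝ) ≤ gromovProd S v x u := Nat.floor_le h0
  have hjge : gromovProd S v x u ≤ (j : ℝ) + 1 := le_of_lt (Nat.lt_floor_add_one _)
  have hjd : j ≤ wordDist S u v := by
    have := le_trans hjle (gp_le_left S hS v x u)
    exact_mod_cast this
  obtain ⟨s, hs⟩ := exists_geodesic S hS u x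
  have hthin : (wordDist S (r j) (s j) : ℝ) ≤ δ := hhyp u v x r s hr hs j hjle
  have hjx : j ≤ wordDist S u x := by
    have h1 : gromovProd S v x u ≤ (wordDist S u x : ℝ) := by
      rw [gp_comm S hS]
      exact gp_le_left S hS x v u
    have := le_trans hjle h1
    exact_mod_cast this
  have hsx : (wordDist S (s j) x : ℝ) = (wordDist S u x : ℝ) - j := geodesic_to_end S hs hjx
  have hid : gromovProd S v x u + gromovProd S v u x = (wordDist S u x : ℝ) :=
    gp_identity S hS v x u
  have hxu : (wordDist S x u : ℝ) = (wordDist S u x : ℝ) := by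
    exact_mod_cast wordDist_symm S hS x u
  have htri : (wordDist S x (r j) : ℝ) ≤ (wordDist S x (s j) : ℝ) + (wordDist S (s j) (r j) : ℝ) := by
    exact_mod_cast wordDist_triangle S hS x (s j) (r j)
  have hsymm1 : (wordDist S x (s j) : ℝ) = (wordDist S (s j) x : ℝ) := by
    exact_mod_cast wordDist_symm S hS x (s j)
  have hsymm2 : (wordDist S (s j) (r j) : ℝ) = (wordDist S (r j) (s j) : ℝ) := by
    exact_mod_cast wordDist_symm S hS (s j) (r j)
  have hcomm : gromovProd S v u x = gromovProd S u v x := gp_comm S hS v u x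
  refine ⟨j, hjd, ?_⟩
  calc (wordDist S x (r j) : ℝ) ≤ (wordDist S (s j) x : ℝ) + δ := by
        rw [← hsymm1]; linarith [htri, hsymm2, hthin]
    _ = (wordDist S u x : ℝ) - j + δ := by rw [hsx]
    _ ≤ gromovProd S u v x + δ + 1 := by
        have : (wordDist S u x : ℝ) - (j : ℝ) ≤ gromovProd S u v x + 1 := by
          rw [← hcomm]
          linarith [hid, hjge]
        linarith

/-- chain lemma: along a chain with long segments and small backtracking, the
Gromov product of the start and the next vertex at each vertex stays small. -/
lemma chain (hS : IsSymmGenSet S) {δ : ℝ} (hδ : 0 ≤ δ) (hhyp : ThinTriangles S δ)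
    {l : ℝ} (hl : 0 ≤ l) (y : ℕ → G) (n : ℕ)
    (hlen : ∀ m, m + 1 ≤ n → 2*l + 4*(δ+1) + 2 ≤ (wordDist S (y m) (y (m+1)) : ℝ))
    (hjoint : ∀ m, m + 2 ≤ n → gromovProd S (y m) (y (m+2)) (y (m+1)) ≤ l) :
    ∀ m, m + 1 ≤ n → gromovProd S (y 0) (y (m+1)) (y m) ≤ l + (δ+1) := by
  intro m
  induction m with
  | zero =>
    intro _
    rw [gp_base]
    linarith
  | succ k ih =>
    intro hk2
    have hIH : gromovProd S (y 0) (y (k+1)) (y k) ≤ l + (δ+1) := ih (by omega)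
    by_contra hcon
    push_neg at hcon
    have hJ : gromovProd S (y k) (y (k+2)) (y (k+1)) ≤ l := hjoint k hk2
    have hid : gromovProd S (y 0) (y k) (y (k+1)) + gromovProd S (y 0) (y (k+1)) (y k)
        = (wordDist S (y k) (y (k+1)) : ℝ) := by
      have := gp_identity S hS (y 0) (y k) (y (k+1))
      have hsy : (wordDist S (y (k+1)) (y k) : ℝ) = (wordDist S (y k) (y (k+1)) : ℝ) := by
        exact_mod_cast wordDist_symm S hS (y (k+1)) (y k)
      linarith
    have hlow : l + 3*(δ+1) + 2 ≤ gromovProd S (y 0) (y k) (y (k+1)) := by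
      have := hlen k (by omega)
      linarith
    have h4 := four_point S hS hδ hhyp (y (k+1)) (y k) (y 0) (y (k+2))
    rw [gp_comm S hS (y k) (y 0) (y (k+1))] at h4
    have hmin : min (gromovProd S (y 0) (y k) (y (k+1))) (gromovProd S (y 0) (y (k+2)) (y (k+1)))
        > l + (δ+1) := by
      apply lt_min
      · linarith
      · exact hcon
    have : l + (δ+1) - (δ+1) < gromovProd S (y k) (y (k+2)) (y (k+1)) := by
      calc l + (δ+1) - (δ+1) < min _ _ - (δ+1) := by linarith [hmin]
        _ ≤ _ := h4
    linarith

/-- the central points of a chain have small Gromov product w.r.t. the chain ends -/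
lemma chainJ (hS : IsSymmGenSet S) {δ : ℝ} (hδ : 0 ≤ δ) (hhyp : ThinTriangles S δ)
    {l : ℝ} (hl : 0 ≤ l) (y : ℕ → G) (n : ℕ)
    (hlen : ∀ m, m + 1 ≤ n → 2*l + 4*(δ+1) + 2 ≤ (wordDist S (y m) (y (m+1)) : ℝ))
    (hjoint : ∀ m, m + 2 ≤ n → gromovProd S (y m) (y (m+2)) (y (m+1)) ≤ l) :
    ∀ m, 1 ≤ m → m + 1 ≤ n → gromovProd S (y 0) (y n) (y m) ≤ l + 2*(δ+1) := by
  intro m hm1 hmn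
  -- reversed chain
  set y' : ℕ → G := fun i => y (n - i) with hy'
  have hlen' : ∀ k, k + 1 ≤ n → 2*l + 4*(δ+1) + 2 ≤ (wordDist S (y' k) (y' (k+1)) : ℝ) := by
    intro k hk
    have e1 : n - k = (n - k - 1) + 1 := by omega
    have hsy : wordDist S (y' k) (y' (k+1)) = wordDist S (y (n-k-1)) (y ((n-k-1)+1)) := by
      show wordDist S (y (n - k)) (y (n - (k+1))) = _
      rw [show n - (k+1) = n - k - 1 from by omega, e1]
      exact wordDist_symm S hS _ _
    rw [hsy]
    exact hlen (n-k-1) (by omega)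
  have hjoint' : ∀ k, k + 2 ≤ n → gromovProd S (y' k) (y' (k+2)) (y' (k+1)) ≤ l := by
    intro k hk
    show gromovProd S (y (n-k)) (y (n-(k+2))) (y (n-(k+1))) ≤ l
    rw [gp_comm S hS]
    rw [show n - (k+2) = n-k-2 from by omega, show n - (k+1) = (n-k-2)+1 from by omega,
      show n - k = (n-k-2)+2 from by omega]
    exact hjoint (n-k-2) (by omega)
  have hrev := chain S hS hδ hhyp hl y' n hlen' hjoint' (n - m - 1) (by omega)
  have hrev2 : gromovProd S (y n) (y m) (y (m+1)) ≤ l + (δ+1) := by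
    have e0 : y' 0 = y n := by show y (n - 0) = y n; rw [Nat.sub_zero]
    have e1 : y' ((n-m-1)+1) = y m := by
      show y (n - ((n-m-1)+1)) = y m
      rw [show n - ((n-m-1)+1) = m from by omega]
    have e2 : y' (n-m-1) = y (m+1) := by
      show y (n - (n-m-1)) = y (m+1)
      rw [show n - (n-m-1) = m+1 from by omega]
    rwa [e0, e1, e2] at hrev
  have hfwd : gromovProd S (y 0) (y (m+1)) (y m) ≤ l + (δ+1) :=
    chain S hS hδ hhyp hl y n hlen hjoint m hmn
  have hid : gromovProd S (y n) (y (m+1)) (y m) + gromovProd S (y n) (y m) (y (m+1))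
      = (wordDist S (y m) (y (m+1)) : ℝ) := by
    have := gp_identity S hS (y n) (y (m+1)) (y m)
    have hsy : (wordDist S (y m) (y (m+1)) : ℝ) = (wordDist S (y (m+1)) (y m) : ℝ) := by
      exact_mod_cast wordDist_symm S hS (y m) (y (m+1))
    linarith
  have hlow : l + 3*(δ+1) + 2 ≤ gromovProd S (y n) (y (m+1)) (y m) := by
    have := hlen m (by omega)
    linarith
  have h4 := four_point S hS hδ hhyp (y m) (y 0) (y n) (y (m+1))
  by_contra hcon
  push_neg at hcon
  have hmin : min (gromovProd S (y 0) (y n) (y m)) (gromovProd S (y n) (y (m+1)) (y m))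
      > l + 2*(δ+1) := by
    apply lt_min
    · exact hcon
    · linarith
  have : l + 2*(δ+1) - (δ+1) < gromovProd S (y 0) (y (m+1)) (y m) := by
    calc l + 2*(δ+1) - (δ+1) < min _ _ - (δ+1) := by linarith [hmin]
      _ ≤ _ := h4
  linarith

/-- main tracking lemma: every point on a geodesic joining the endpoints of a
chain is uniformly close to one of the geodesic segments of the chain. -/
lemma tracking (hS : IsSymmGenSet S) {δ : ℝ} (hδ : 0 ≤ δ) (hhyp : ThinTriangles S δ)
    {l : ℝ} (hl : 0 ≤ l) (y : ℕ → G) (n : ℕ) (hn : 1 ≤ n)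
    (hlen : ∀ m, m + 1 ≤ n → 2*l + 4*(δ+1) + 2 ≤ (wordDist S (y m) (y (m+1)) : ℝ))
    (hjoint : ∀ m, m + 2 ≤ n → gromovProd S (y m) (y (m+2)) (y (m+1)) ≤ l)
    {p : ℕ → G} (hp : IsGeodesic S (y 0) (y n) p) :
    ∀ i, i ≤ wordDist S (y 0) (y n) →
      ∃ m, m + 1 ≤ n ∧ ∃ r : ℕ → G, IsGeodesic S (y m) (y (m+1)) r ∧
        ∃ j, j ≤ wordDist S (y m) (y (m+1)) ∧
          (wordDist S (p i) (r j) : ℝ) ≤ l + 5*(δ+1) := by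
  intro i hi
  set x := p i with hx
  have hδ1 : (1:ℝ) ≤ δ + 1 := by linarith
  -- basic distances
  have dx0 : (wordDist S x (y 0) : ℝ) = (i : ℝ) := by
    have h1 := hp.2.2 0 i (Nat.zero_le i) hi
    rw [hp.1] at h1
    have h2 : wordDist S x (y 0) = wordDist S (y 0) x := wordDist_symm S hS x (y 0)
    rw [h2, hx, h1]
    simp
  have dxn : (wordDist S x (y n) : ℝ) = (wordDist S (y 0) (y n) : ℝ) - (i : ℝ) :=
    geodesic_to_end S hp hi
  have gp0 : gromovProd S (y 0) (y n) x = 0 := by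
    rw [gromovProd]
    rw [dx0, dxn]
    ring
  -- minimal M
  have hne : ∃ m, m ≤ n ∧ gromovProd S (y 0) (y m) x ≤ δ + 1 := ⟨n, le_refl n, by rw [gp0]; linarith⟩
  set T := {m | m ≤ n ∧ gromovProd S (y 0) (y m) x ≤ δ + 1} with hT
  have hTne : T.Nonempty := hne
  set M := sInf T with hM
  obtain ⟨hMn, hMgp⟩ : M ≤ n ∧ gromovProd S (y 0) (y M) x ≤ δ + 1 := Nat.sInf_mem hTne
  rcases Nat.eq_zero_or_pos M with hM0 | hM1
  · -- x is close to y 0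
    rw [hM0] at hMgp
    have hd : (wordDist S x (y 0) : ℝ) ≤ δ + 1 := by
      rw [gp_self_left S (y 0) x] at hMgp
      exact hMgp
    obtain ⟨r, hr⟩ := exists_geodesic S hS (y 0) (y 1)
    refine ⟨0, by omega, r, by simpa using hr, 0, Nat.zero_le _, ?_⟩
    have hr0 : r 0 = y 0 := hr.1
    rw [hr0]
    linarith
  · -- M ≥ 1
    have hMm : ¬ (M - 1 ∈ T) := Nat.notMem_of_lt_sInf (by omega)
    have hgpM1 : gromovProd S (y 0) (y (M-1)) x > δ + 1 := by
      by_contra hc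
      push_neg at hc
      exact hMm ⟨by omega, hc⟩
    -- step 1 : gp (y (M-1)) (y n) x ≤ δ + 1
    have h41 := four_point S hS hδ hhyp x (y 0) (y (M-1)) (y n)
    rw [gp0] at h41
    have step1 : gromovProd S (y (M-1)) (y n) x ≤ δ + 1 := by
      by_contra hc
      push_neg at hc
      have := lt_min hgpM1 hc
      linarith [this, h41]
    -- step 2
    have h42 := four_point S hS hδ hhyp x (y (M-1)) (y M) (y n)
    have step2 : min (gromovProd S (y (M-1)) (y M) x) (gromovProd S (y M) (y n) x)
        ≤ 2*(δ+1) := by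
      have hMM : M - 1 + 1 = M := by omega
      linarith [h42, step1]
    rcases le_or_gt (gromovProd S (y (M-1)) (y M) x) (2*(δ+1)) with gA | gA'
    · -- case A : near the segment [y (M-1), y M]
      obtain ⟨r, hr⟩ := exists_geodesic S hS (y (M-1)) (y M)
      obtain ⟨j, hj, hjd⟩ := near_geodesic S hS hhyp x (y (M-1)) (y M) hr
      have hMM : M - 1 + 1 = M := by omega
      refine ⟨M-1, by omega, r, by rw [hMM]; exact hr, j, by rw [hMM]; exact hj, ?_⟩
      calc (wordDist S x (r j) : ℝ) ≤ gromovProd S (y (M-1)) (y M) x + δ + 1 := hjd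
        _ ≤ 2*(δ+1) + (δ+1) := by linarith
        _ ≤ l + 5*(δ+1) := by linarith
    · have gB : gromovProd S (y M) (y n) x ≤ 2*(δ+1) := by
        rcases min_le_iff.mp step2 with h | h
        · linarith
        · exact h
      rcases eq_or_lt_of_le hMn with hMeq | hMlt
      · -- M = n : x close to y n
        have hdxn : (wordDist S x (y n) : ℝ) ≤ 2*(δ+1) := by
          rw [hMeq] at gB
          rw [gp_self_left S (y n) x] at gB
          exact gB
        obtain ⟨r, hr⟩ := exists_geodesic S hS (y (n-1)) (y n)
        have hMM : n - 1 + 1 = n := by omega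
        refine ⟨n-1, by omega, r, by rw [hMM]; exact hr, wordDist S (y (n-1)) (y n),
          by rw [hMM], ?_⟩
        have hrend : r (wordDist S (y (n-1)) (y n)) = y n := hr.2.1
        rw [hrend]
        linarith
      · -- 1 ≤ M < n
        have hJ := chainJ S hS hδ hhyp hl y n hlen hjoint M (by omega) (by omega)
        -- identity : d(x, y M) = gp(y0)(yM)x + gp(yM)(yn)x + gp(y0)(yn)(yM)
        have hb : (wordDist S x (y M) : ℝ) ≤ (δ+1) + 2*(δ+1) + (l + 2*(δ+1)) := by
          have e1 : gromovProd S (y 0) (y M) x = ((wordDist S x (y 0) : ℝ) + (wordDist S x (y M) : ℝ) - (wordDist S (y 0) (y M) : ℝ))/2 := rfl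
          have e2 : gromovProd S (y M) (y n) x = ((wordDist S x (y M) : ℝ) + (wordDist S x (y n) : ℝ) - (wordDist S (y M) (y n) : ℝ))/2 := rfl
          have e3 : gromovProd S (y 0) (y n) (y M) = ((wordDist S (y M) (y 0) : ℝ) + (wordDist S (y M) (y n) : ℝ) - (wordDist S (y 0) (y n) : ℝ))/2 := rfl
          have s1 : (wordDist S (y M) (y 0) : ℝ) = (wordDist S (y 0) (y M) : ℝ) := by
            exact_mod_cast wordDist_symm S hS (y M) (y 0)
          have s2 : (wordDist S x (y 0) : ℝ) + (wordDist S x (y n) : ℝ) = (wordDist S (y 0) (y n) : ℝ) := by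
            rw [dx0, dxn]; ring
          linarith [hMgp, gB, hJ]
        obtain ⟨r, hr⟩ := exists_geodesic S hS (y M) (y (M+1))
        refine ⟨M, by omega, r, hr, 0, Nat.zero_le _, ?_⟩
        rw [hr.1]
        linarith

/-- balls in the word metric are finite -/
lemma ball_finite (hS : IsSymmGenSet S) (n : ℕ) :
    {g : G | wordLength S g ≤ n}.Finite := by
  induction n with
  | zero =>
    apply Set.Finite.subset (Set.finite_singleton (1 : G))
    intro g hg
    simp only [Set.mem_setOf_eq, Nat.le_zero] at hg
    obtain ⟨list, hl, hp, hlen⟩ := wordLength_spec S hS g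
    rw [hg] at hlen
    rw [List.length_eq_zero_iff] at hlen
    rw [hlen] at hp
    simp only [List.prod_nil] at hp
    simp [← hp]
  | succ n ih =>
    apply Set.Finite.subset (Set.Finite.union ih (Set.Finite.mul ih hS.1))
    intro g hg
    simp only [Set.mem_setOf_eq] at hg
    obtain ⟨list, hl, hp, hlen⟩ := wordLength_spec S hS g
    rcases Nat.lt_or_ge (wordLength S g) (n+1) with h | h
    · left
      simp only [Set.mem_setOf_eq]
      omega
    · right
      have hlen1 : list.length = n + 1 := by omega
      have hne : list ≠ [] := by
        intro hc
        rw [hc] at hlen1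
        simp at hlen1
      have hsplit : list = list.dropLast ++ [list.getLast hne] := (List.dropLast_append_getLast hne).symm
      refine ⟨list.dropLast.prod, ?_, list.getLast hne, ?_, ?_⟩
      · simp only [Set.mem_setOf_eq]
        have : wordLength S list.dropLast.prod ≤ list.dropLast.length :=
          wordLength_le S (fun x hx => hl x (List.mem_of_mem_dropLast hx)) rfl
        have : list.dropLast.length = n := by
          rw [List.length_dropLast, hlen1]
          omega
        omega
      · exact hl _ (List.getLast_mem hne)
      · rw [← hp]
        conv_rhs => rw [hsplit]
        rw [List.prod_append]
        simp

/-- GMRS-type lemma : a point close to both subgroups is close to the intersection -/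
lemma gmrs (hS : IsSymmGenSet S) (A B : Subgroup G) (R : ℝ) (hR : 0 ≤ R) :
    ∃ r₂ : ℝ, 0 ≤ r₂ ∧ ∀ x a b : G, a ∈ A → b ∈ B →
      (wordDist S x a : ℝ) ≤ R → (wordDist S x b : ℝ) ≤ R →
      ∃ k, k ∈ A ∧ k ∈ B ∧ (wordDist S x k : ℝ) ≤ r₂ := by
  classical
  set N := Nat.ceil (2*R) with hN
  set P : G → Prop := fun z => ∃ a, a ∈ A ∧ ∃ b, b ∈ B ∧ a⁻¹ * b = z with hP
  set W : G → ℕ := fun z => if h : P z then wordLength S h.choose else 0 with hW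
  have hfin : ({g : G | wordLength S g ≤ N}).Finite := ball_finite S hS N
  obtain ⟨C, hC⟩ := (hfin.image W).bddAbove
  refine ⟨R + C, by positivity, ?_⟩
  intro x a b ha hb hxa hxb
  set z := a⁻¹ * b with hz
  have hzball : z ∈ {g : G | wordLength S g ≤ N} := by
    simp only [Set.mem_setOf_eq]
    have h1 : wordLength S z = wordDist S a b := rfl
    have h2 : wordDist S a b ≤ wordDist S a x + wordDist S x b := wordDist_triangle S hS a x b
    have h3 : (wordDist S a x : ℝ) = (wordDist S x a : ℝ) := by
      exact_mod_cast wordDist_symm S hS a x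
    have h4 : (wordLength S z : ℝ) ≤ 2*R := by
      rw [h1]
      calc ((wordDist S a b : ℕ) : ℝ) ≤ (wordDist S a x : ℝ) + (wordDist S x b : ℝ) := by
            exact_mod_cast h2
        _ ≤ R + R := by rw [h3]; exact add_le_add hxa hxb
        _ = 2*R := by ring
    have := Nat.le_ceil (2*R)
    exact_mod_cast le_trans h4 this
  have hPz : P z := ⟨a, ha, b, hb, rfl⟩
  obtain ⟨ha0, b0, hb0, hab0⟩ := hPz.choose_spec
  set a0 := hPz.choose with ha0def
  have hWz : W z = wordLength S a0 := by
    rw [hW]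
    simp only [dif_pos hPz]
    rfl
  have hWC : (W z : ℝ) ≤ C := by
    have : W z ∈ W '' {g : G | wordLength S g ≤ N} := ⟨z, hzball, rfl⟩
    exact_mod_cast hC this
  -- k := a * a0⁻¹
  refine ⟨a * a0⁻¹, A.mul_mem ha (A.inv_mem ha0), ?_, ?_⟩
  · have : a * a0⁻¹ = b * b0⁻¹ := by
      have h5 : a⁻¹ * b = a0⁻¹ * b0 := hab0.symm
      have : b = a * a0⁻¹ * b0 := by
        rw [mul_assoc]
        rw [← h5]
        group
      rw [this]
      group
    rw [this]
    exact B.mul_mem hb (B.inv_mem hb0)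
  · have h6 : wordDist S x (a * a0⁻¹) ≤ wordDist S x a + wordDist S a (a * a0⁻¹) :=
      wordDist_triangle S hS x a _
    have h7 : wordDist S a (a * a0⁻¹) = wordLength S a0 := by
      rw [wordDist]
      rw [show a⁻¹ * (a * a0⁻¹) = a0⁻¹ by group]
      exact wordLength_inv S hS a0
    calc (wordDist S x (a * a0⁻¹) : ℝ) ≤ (wordDist S x a : ℝ) + (wordLength S a0 : ℝ) := by
          rw [← h7]; exact_mod_cast h6
      _ ≤ R + C := by
          apply add_le_add hxa
          rw [← hWz]
          exact hWC

/-- representation of an element of a join as a product -/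
lemma exists_rep_union (A' B' : Subgroup G) {h : G} (hh : h ∈ A' ⊔ B') :
    ∃ l : List G, (∀ x ∈ l, x ∈ (A' : Set G) ∪ (B' : Set G)) ∧ l.prod = h := by
  rw [Subgroup.sup_eq_closure] at hh
  refine Subgroup.closure_induction ?_ ?_ ?_ ?_ hh
  · intro x hx; exact ⟨[x], by simpa using hx, by simp⟩
  · exact ⟨[], by simp, by simp⟩
  · rintro x y _ _ ⟨l1, h1, p1⟩ ⟨l2, h2, p2⟩
    exact ⟨l1 ++ l2, by
      intro x hx
      rcases List.mem_append.mp hx with hx | hx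
      exacts [h1 x hx, h2 x hx], by simp [p1, p2]⟩
  · rintro x _ ⟨l, hl, pl⟩
    refine ⟨(l.map (·⁻¹)).reverse, ?_, ?_⟩
    · intro y hy
      simp only [List.mem_reverse, List.mem_map] at hy
      obtain ⟨z, hz, rfl⟩ := hy
      rcases hl z hz with h | h
      · exact Or.inl (A'.inv_mem h)
      · exact Or.inr (B'.inv_mem h)
    · rw [← pl, ← List.prod_inv_reverse]

/-- the joint Gromov product bound at a minimal joint -/
lemma joint_bound (hS : IsSymmGenSet S) {δ : ℝ} (hδ : 0 ≤ δ) (hhyp : ThinTriangles S δ)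
    {ε : ℝ} (hε : 0 ≤ ε) (A B : Subgroup G)
    (hA : IsQuasiconvex S ε (A : Set G)) (hB : IsQuasiconvex S ε (B : Set G))
    {r₂ : ℝ} (hr₂ : 0 ≤ r₂)
    (hgmrs : ∀ x a b : G, a ∈ A → b ∈ B →
      (wordDist S x a : ℝ) ≤ ε + δ → (wordDist S x b : ℝ) ≤ ε + δ →
      ∃ k, k ∈ A ∧ k ∈ B ∧ (wordDist S x k : ℝ) ≤ r₂)
    (a b : G) (hab : (a ∈ A ∧ b ∈ B) ∨ (a ∈ B ∧ b ∈ A))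
    (hmin : ∀ k, k ∈ A → k ∈ B →
      (wordLength S a : ℝ) + (wordLength S b : ℝ) ≤
        (wordLength S (a * k) : ℝ) + (wordLength S (k⁻¹ * b) : ℝ)) :
    gromovProd S a⁻¹ b 1 ≤ r₂ + δ + 2 := by
  by_contra hcon
  push_neg at hcon
  set ρ := gromovProd S a⁻¹ b 1 with hρ
  set t := Nat.floor (r₂ + δ) + 2 with ht
  have ht1 : (t : ℝ) ≤ r₂ + δ + 2 := by
    have := Nat.floor_le (by linarith : (0:ℝ) ≤ r₂ + δ)
    rw [ht]; push_cast
    linarith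
  have ht2 : r₂ + δ + 1 ≤ (t : ℝ) := by
    have := Nat.lt_floor_add_one (r₂ + δ)
    rw [ht]; push_cast
    linarith
  have htρ : (t : ℝ) ≤ ρ := by linarith
  have hta : t ≤ wordDist S 1 a⁻¹ := by
    have h1 : ρ ≤ (wordDist S 1 a⁻¹ : ℝ) := gp_le_left S hS a⁻¹ b 1
    exact_mod_cast le_trans htρ h1
  have htb : t ≤ wordDist S 1 b := by
    have h1 : ρ ≤ (wordDist S 1 b : ℝ) := by
      rw [hρ, gp_comm S hS]
      exact gp_le_left S hS b a⁻¹ 1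
    exact_mod_cast le_trans htρ h1
  obtain ⟨α, hα⟩ := exists_geodesic S hS 1 a⁻¹
  obtain ⟨β, hβ⟩ := exists_geodesic S hS 1 b
  have hthin : (wordDist S (α t) (β t) : ℝ) ≤ δ := hhyp 1 a⁻¹ b α β hα hβ t htρ
  -- find approximants
  have happrox : ∃ k, k ∈ A ∧ k ∈ B ∧ (wordDist S (α t) k : ℝ) ≤ r₂ := by
    rcases hab with ⟨haA, hbB⟩ | ⟨haB, hbA⟩
    · obtain ⟨u, huA, hu⟩ := hA 1 (one_mem A) a⁻¹ (A.inv_mem haA) α hα t hta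
      obtain ⟨v, hvB, hv⟩ := hB 1 (one_mem B) b hbB β hβ t htb
      refine hgmrs (α t) u v huA hvB (by linarith) ?_
      have h2 : (wordDist S (α t) v : ℝ) ≤ (wordDist S (α t) (β t) : ℝ) + (wordDist S (β t) v : ℝ) := by
        exact_mod_cast wordDist_triangle S hS (α t) (β t) v
      linarith
    · obtain ⟨u, huB, hu⟩ := hB 1 (one_mem B) a⁻¹ (B.inv_mem haB) α hα t hta
      obtain ⟨v, hvA, hv⟩ := hA 1 (one_mem A) b hbA β hβ t htb
      have h2 : (wordDist S (α t) v : ℝ) ≤ (wordDist S (α t) (β t) : ℝ) + (wordDist S (β t) v : ℝ) := by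
        exact_mod_cast wordDist_triangle S hS (α t) (β t) v
      exact hgmrs (α t) v u hvA huB (by linarith) (by linarith)
  obtain ⟨k, hkA, hkB, hk⟩ := happrox
  -- distances from k to the endpoints
  have hda : (wordDist S (α t) a⁻¹ : ℝ) = (wordDist S 1 a⁻¹ : ℝ) - t := geodesic_to_end S hα hta
  have hdb : (wordDist S (β t) b : ℝ) = (wordDist S 1 b : ℝ) - t := geodesic_to_end S hβ htb
  have hka : (wordDist S k a⁻¹ : ℝ) ≤ r₂ + ((wordDist S 1 a⁻¹ : ℝ) - t) := by
    have h1 : (wordDist S k a⁻¹ : ℝ) ≤ (wordDist S k (α t) : ℝ) + (wordDist S (α t) a⁻¹ : ℝ) := by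
      exact_mod_cast wordDist_triangle S hS k (α t) a⁻¹
    have h2 : (wordDist S k (α t) : ℝ) = (wordDist S (α t) k : ℝ) := by
      exact_mod_cast wordDist_symm S hS k (α t)
    linarith
  have hkb : (wordDist S k b : ℝ) ≤ r₂ + δ + ((wordDist S 1 b : ℝ) - t) := by
    have h1 : (wordDist S k b : ℝ) ≤ (wordDist S k (α t) : ℝ) + (wordDist S (α t) (β t) : ℝ)
        + (wordDist S (β t) b : ℝ) := by
      have t1 := wordDist_triangle S hS k (α t) b
      have t2 := wordDist_triangle S hS (α t) (β t) b
      have : wordDist S k b ≤ wordDist S k (α t) + wordDist S (α t) (β t) + wordDist S (β t) b := by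
        omega
      exact_mod_cast this
    have h2 : (wordDist S k (α t) : ℝ) = (wordDist S (α t) k : ℝ) := by
      exact_mod_cast wordDist_symm S hS k (α t)
    linarith
  -- translate to word lengths
  have e1 : wordDist S k a⁻¹ = wordLength S (a * k) := by
    rw [wordDist, show k⁻¹ * a⁻¹ = (a * k)⁻¹ by group, wordLength_inv S hS]
  have e2 : wordDist S k b = wordLength S (k⁻¹ * b) := rfl
  have e3 : (wordDist S 1 a⁻¹ : ℝ) = (wordLength S a : ℝ) := by
    rw [wordDist_one_left, wordLength_inv S hS]
  have e4 : (wordDist S 1 b : ℝ) = (wordLength S b : ℝ) := by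
    rw [wordDist_one_left]
  have := hmin k hkA hkB
  rw [← e1, ← e2] at this
  have hsum : (wordDist S k a⁻¹ : ℝ) + (wordDist S k b : ℝ) ≤
      (wordLength S a : ℝ) + (wordLength S b : ℝ) + 2*r₂ + δ - 2*t := by
    rw [← e3, ← e4]
    linarith
  linarith

lemma list_split {α : Type*} (l : List α) (m : ℕ) (h : m + 1 < l.length) :
    l = l.take m ++ l[m] :: l[m+1] :: l.drop (m+2) := by
  conv_lhs => rw [← List.take_append_drop m l]
  congr 1
  rw [List.drop_eq_getElem_cons (by omega : m < l.length)]
  congr 1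
  rw [List.drop_eq_getElem_cons (by omega : m + 1 < l.length)]

/-- a minimal representation of an element of the join -/
lemma minimal_rep (A' B' : Subgroup G) {h : G} (hh : h ∈ A' ⊔ B') :
    ∃ l : List G, (∀ x ∈ l, x ∈ (A' : Set G) ∪ (B' : Set G)) ∧ l.prod = h ∧
      (2 ≤ l.length →
        (∀ m, (hm : m + 1 < l.length) →
          ¬(l[m] ∈ A' ∧ l[m+1] ∈ A') ∧ ¬(l[m] ∈ B' ∧ l[m+1] ∈ B')) ∧
        (∀ m, (hm : m < l.length) → l[m] ∉ A' ⊓ B') ∧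
        (∀ m, (hm : m + 1 < l.length) → ∀ k, k ∈ A' ⊓ B' →
          wordLength S l[m] + wordLength S l[m+1] ≤
            wordLength S (l[m] * k) + wordLength S (k⁻¹ * l[m+1]))) := by
  classical
  set Rset : Set (List G) :=
    {l | (∀ x ∈ l, x ∈ (A' : Set G) ∪ (B' : Set G)) ∧ l.prod = h} with hRset
  have hRne : Rset.Nonempty := by
    obtain ⟨l, hl, hp⟩ := exists_rep_union A' B' hh
    exact ⟨l, hl, hp⟩
  set NS : Set ℕ := {n | ∃ l ∈ Rset, l.length = n} with hNS
  have hNSne : NS.Nonempty := by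
    obtain ⟨l, hl⟩ := hRne
    exact ⟨l.length, l, hl, rfl⟩
  set n₀ := sInf NS with hn₀
  obtain ⟨l₁, hl₁R, hl₁len⟩ : ∃ l ∈ Rset, l.length = n₀ := Nat.sInf_mem hNSne
  set SS : Set ℕ := {s | ∃ l ∈ Rset, l.length = n₀ ∧ (l.map (wordLength S)).sum = s} with hSS
  have hSSne : SS.Nonempty := ⟨(l₁.map (wordLength S)).sum, l₁, hl₁R, hl₁len, rfl⟩
  obtain ⟨l₀, hl₀R, hl₀len, hl₀sum⟩ :
      ∃ l ∈ Rset, l.length = n₀ ∧ (l.map (wordLength S)).sum = sInf SS := Nat.sInf_mem hSSne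
  have hQ1 : ∀ l ∈ Rset, n₀ ≤ l.length := fun l hl => Nat.sInf_le ⟨l, hl, rfl⟩
  have hQ2 : ∀ l ∈ Rset, l.length = n₀ → sInf SS ≤ (l.map (wordLength S)).sum :=
    fun l hl hlen => Nat.sInf_le ⟨l, hl, hlen, rfl⟩
  obtain ⟨hl₀mem, hl₀prod⟩ := hl₀R
  refine ⟨l₀, hl₀mem, hl₀prod, ?_⟩
  intro hlen2
  -- merging is impossible
  have hmerge : ∀ m, (hm : m + 1 < l₀.length) →
      l₀[m] * l₀[m+1] ∈ (A' : Set G) ∪ (B' : Set G) → False := by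
    intro m hm hmem
    set l' : List G := l₀.take m ++ (l₀[m] * l₀[m+1]) :: l₀.drop (m+2) with hl'
    have hl'R : l' ∈ Rset := by
      constructor
      · intro x hx
        rcases List.mem_append.mp hx with hx | hx
        · exact hl₀mem x (List.mem_of_mem_take hx)
        · rcases List.mem_cons.mp hx with hx | hx
          · rw [hx]; exact hmem
          · exact hl₀mem x (List.mem_of_mem_drop hx)
      · rw [← hl₀prod]
        conv_rhs => rw [list_split l₀ m hm]
        simp only [hl', List.prod_append, List.prod_cons]
        group
    have hl'len : l'.length = l₀.length - 1 := by
      have ht : (l₀.take m).length = m := by rw [List.length_take]; omega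
      have hd : (l₀.drop (m+2)).length = l₀.length - (m+2) := List.length_drop
      simp only [hl', List.length_append, List.length_cons, ht, hd]
      omega
    have := hQ1 l' hl'R
    omega
  have halt : ∀ m, (hm : m + 1 < l₀.length) →
      ¬(l₀[m] ∈ A' ∧ l₀[m+1] ∈ A') ∧ ¬(l₀[m] ∈ B' ∧ l₀[m+1] ∈ B') := by
    intro m hm
    constructor
    · rintro ⟨h1, h2⟩
      exact hmerge m hm (Or.inl (A'.mul_mem h1 h2))
    · rintro ⟨h1, h2⟩
      exact hmerge m hm (Or.inr (B'.mul_mem h1 h2))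
  refine ⟨halt, ?_, ?_⟩
  · -- no element in the intersection
    intro m hm hK
    rcases Nat.lt_or_ge (m+1) l₀.length with hm1 | hm1
    · -- merge with right neighbour
      have hnb := hl₀mem l₀[m+1] (l₀.getElem_mem hm1)
      rcases hnb with hnb | hnb
      · exact hmerge m hm1 (Or.inl (A'.mul_mem hK.1 hnb))
      · exact hmerge m hm1 (Or.inr (B'.mul_mem hK.2 hnb))
    · -- m is the last index; merge with left neighbour
      have hm2 : 1 ≤ m := by omega
      have hmm : (m - 1) + 1 < l₀.length := by omega
      have hee : m - 1 + 1 = m := by omega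
      have hnb := hl₀mem (l₀[m-1]'(by omega)) (l₀.getElem_mem (by omega))
      rcases hnb with hnb | hnb
      · refine hmerge (m-1) hmm (Or.inl (A'.mul_mem hnb ?_))
        have : l₀[m-1+1]'(by omega) = l₀[m] := by
          congr 1
        rw [this]
        exact hK.1
      · refine hmerge (m-1) hmm (Or.inr (B'.mul_mem hnb ?_))
        have : l₀[m-1+1]'(by omega) = l₀[m] := by
          congr 1
        rw [this]
        exact hK.2
  · -- K-minimality
    intro m hm k hk
    by_contra hcon
    push_neg at hcon
    set l' : List G := l₀.take m ++ (l₀[m] * k) :: (k⁻¹ * l₀[m+1]) :: l₀.drop (m+2) with hl'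
    have hl'R : l' ∈ Rset := by
      constructor
      · intro x hx
        rcases List.mem_append.mp hx with hx | hx
        · exact hl₀mem x (List.mem_of_mem_take hx)
        · rcases List.mem_cons.mp hx with hx | hx
          · rw [hx]
            rcases hl₀mem l₀[m] (l₀.getElem_mem (by omega)) with h1 | h1
            · exact Or.inl (A'.mul_mem h1 hk.1)
            · exact Or.inr (B'.mul_mem h1 hk.2)
          · rcases List.mem_cons.mp hx with hx | hx
            · rw [hx]
              rcases hl₀mem l₀[m+1] (l₀.getElem_mem hm) with h1 | h1
              · exact Or.inl (A'.mul_mem (A'.inv_mem hk.1) h1)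
              · exact Or.inr (B'.mul_mem (B'.inv_mem hk.2) h1)
            · exact hl₀mem x (List.mem_of_mem_drop hx)
      · rw [← hl₀prod]
        conv_rhs => rw [list_split l₀ m hm]
        simp only [hl', List.prod_append, List.prod_cons]
        group
    have hl'len : l'.length = n₀ := by
      have ht : (l₀.take m).length = m := by rw [List.length_take]; omega
      have hd : (l₀.drop (m+2)).length = l₀.length - (m+2) := List.length_drop
      simp only [hl', List.length_append, List.length_cons, ht, hd]
      omega
    have hsum := hQ2 l' hl'R hl'len
    have hsum0 : (l₀.map (wordLength S)).sum = (((l₀.map (wordLength S)).take m)).sum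
        + (wordLength S l₀[m] + (wordLength S l₀[m+1] + ((l₀.map (wordLength S)).drop (m+2)).sum)) := by
      conv_lhs => rw [list_split l₀ m hm]
      simp only [List.map_append, List.map_cons, List.sum_append, List.sum_cons,
        List.map_take, List.map_drop]
    have hsum' : (l'.map (wordLength S)).sum = (((l₀.map (wordLength S)).take m)).sum
        + (wordLength S (l₀[m] * k) + (wordLength S (k⁻¹ * l₀[m+1]) + ((l₀.map (wordLength S)).drop (m+2)).sum)) := by
      simp only [hl', List.map_append, List.map_cons, List.sum_append, List.sum_cons,
        List.map_take, List.map_drop]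
    rw [hl₀sum] at hsum0
    omega

end GitikAux


open GitikAux

/-- **Lemma 4 (R. Gitik).** Let `A` and `B` be `ε`-quasiconvex subgroups of a
`δ`-hyperbolic group `G`. There is a constant `C₂` depending only on `G`, `δ` and `ε`
such that: for any quasiconvex subgroups `A' ≤ A` and `B' ≤ B` with `A' ∩ B' = A ∩ B`,
if all elements of `A'` and `B'` shorter than `C₂` belong to `A ∩ B`, then the subgroup
`⟨A', B'⟩` is quasiconvex in `G`. -/
theorem generated_subgroup_quasiconvex
    {G : Type*} [Group G] (S : Set G) (hS : IsSymmGenSet S)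
    (δ : ℝ) (hδ : 0 ≤ δ) (hhyp : ThinTriangles S δ)
    (ε : ℝ) (hε : 0 ≤ ε) (A B : Subgroup G)
    (hA : IsQuasiconvex S ε (A : Set G)) (hB : IsQuasiconvex S ε (B : Set G)) :
    ∃ C₂ : ℝ, 0 ≤ C₂ ∧
      ∀ A' B' : Subgroup G, A' ≤ A → B' ≤ B →
        (∃ ε' : ℝ, 0 ≤ ε' ∧ IsQuasiconvex S ε' (A' : Set G)) →
        (∃ ε' : ℝ, 0 ≤ ε' ∧ IsQuasiconvex S ε' (B' : Set G)) →
        A' ⊓ B' = A ⊓ B →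
        (∀ g : G, g ∈ (A' : Set G) ∪ (B' : Set G) → (wordLength S g : ℝ) < C₂ →
          g ∈ A ⊓ B) →
        ∃ ε'' : ℝ, 0 ≤ ε'' ∧ IsQuasiconvex S ε'' ((A' ⊔ B' : Subgroup G) : Set G) := by
  classical
  obtain ⟨r₂, hr₂0, hgmrs⟩ := GitikAux.gmrs S hS A B (ε + δ) (by linarith)
  refine ⟨2*(r₂ + δ + 2) + 4*(δ+1) + 2, by linarith, ?_⟩
  intro A' B' hA'A hB'B hqA' hqB' hKeq hshort
  obtain ⟨εa, hεa0, hQA'⟩ := hqA'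
  obtain ⟨εb, hεb0, hQB'⟩ := hqB'
  set lJ : ℝ := r₂ + δ + 2 with hlJdef
  have hlJ0 : 0 ≤ lJ := by rw [hlJdef]; linarith
  have hmaxab : 0 ≤ max εa εb := le_trans hεa0 (le_max_left _ _)
  refine ⟨lJ + 5*(δ+1) + max εa εb, by linarith, ?_⟩
  intro u hu v hv p hp i hi
  have huH : u ∈ A' ⊔ B' := hu
  have hvH : v ∈ A' ⊔ B' := hv
  set h : G := u⁻¹ * v with hhdef
  have hhH : h ∈ A' ⊔ B' := mul_mem (inv_mem huH) hvH
  have hduv : wordDist S u v = wordDist S 1 h := by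
    rw [wordDist_one_left]
    rfl
  set p' : ℕ → G := fun j => u⁻¹ * p j with hp'def
  have hp'g : IsGeodesic S 1 h p' := by
    obtain ⟨h1, h2, h3⟩ := hp
    refine ⟨by simp [hp'def, h1], ?_, ?_⟩
    · show u⁻¹ * p (wordDist S 1 h) = h
      rw [← hduv, h2]
    · intro a b hab hb
      show wordDist S (u⁻¹ * p a) (u⁻¹ * p b) = b - a
      rw [wordDist_left]
      exact h3 a b hab (by rw [hduv]; exact hb)
  suffices hq' : ∃ q', q' ∈ A' ⊔ B' ∧
      (wordDist S (p' i) q' : ℝ) ≤ lJ + 5*(δ+1) + max εa εb by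
    obtain ⟨q', hq'H, hq'd⟩ := hq'
    refine ⟨u * q', mul_mem huH hq'H, ?_⟩
    have hpi : p i = u * p' i := by simp [hp'def]
    rw [hpi, wordDist_left]
    exact hq'd
  -- minimal representation of h
  obtain ⟨l₀, hmem, hprod, hminprops⟩ := GitikAux.minimal_rep S A' B' hhH
  rcases Nat.lt_or_ge l₀.length 2 with hsmall | hbig
  · rcases Nat.lt_or_ge l₀.length 1 with h0 | h1
    · -- length 0 : h = 1
      have hnil : l₀ = [] := List.length_eq_zero_iff.mp (by omega)
      have hh1 : h = 1 := by rw [← hprod, hnil]; simp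
      have hdv : wordDist S u v = 0 := by
        rw [hduv, hh1, wordDist_self]
      have hi0 : i = 0 := by omega
      refine ⟨1, one_mem _, ?_⟩
      rw [hi0, hp'g.1, wordDist_self]
      push_cast
      linarith
    · -- length 1
      obtain ⟨x, hx1⟩ := List.length_eq_one_iff.mp (show l₀.length = 1 by omega)
      have hxh : x = h := by rw [← hprod, hx1, List.prod_singleton]
      have hxm : x ∈ (A' : Set G) ∪ (B' : Set G) := hmem x (by rw [hx1]; simp)
      rcases hxm with hx | hx
      · obtain ⟨q₀, hq₀m, hq₀d⟩ := hQA' 1 (one_mem A') h (by rw [← hxh]; exact hx) p' hp'g i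
          (by rw [← hduv]; exact hi)
        refine ⟨q₀, (le_sup_left : A' ≤ A' ⊔ B') hq₀m, ?_⟩
        have : εa ≤ max εa εb := le_max_left _ _
        linarith
      · obtain ⟨q₀, hq₀m, hq₀d⟩ := hQB' 1 (one_mem B') h (by rw [← hxh]; exact hx) p' hp'g i
          (by rw [← hduv]; exact hi)
        refine ⟨q₀, (le_sup_right : B' ≤ A' ⊔ B') hq₀m, ?_⟩
        have : εb ≤ max εa εb := le_max_right _ _
        linarith
  · -- main case : at least two syllables
    obtain ⟨halt, hnoK', hkmin⟩ := hminprops hbig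
    set n₀ := l₀.length with hn₀def
    set y : ℕ → G := fun m => (l₀.take m).prod with hydef
    have hy0 : y 0 = 1 := by simp [hydef]
    have hyn : y n₀ = h := by
      show (l₀.take n₀).prod = h
      rw [hn₀def, List.take_length, hprod]
    have hystep : ∀ m, (hm : m < n₀) → y (m+1) = y m * (l₀[m]'(by omega)) := fun m hm =>
      List.prod_take_succ l₀ m (by omega)
    have hdstep : ∀ m, (hm : m < n₀) →
        wordDist S (y m) (y (m+1)) = wordLength S (l₀[m]'(by omega)) := by
      intro m hm
      rw [hystep m hm, wordDist, inv_mul_cancel_left]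
    have hnoK : ∀ m, (hm : m < n₀) → l₀[m]'(by omega) ∉ A ⊓ B := by
      intro m hm hKm
      exact hnoK' m hm (by rw [hKeq]; exact hKm)
    have hlong : ∀ m, (hm : m < n₀) → 2*lJ + 4*(δ+1) + 2 ≤ (wordLength S l₀[m] : ℝ) := by
      intro m hm
      by_contra hc
      push_neg at hc
      refine hnoK m hm (hshort l₀[m] (hmem _ (List.getElem_mem hm)) ?_)
      rw [hlJdef] at hc
      linarith
    have hlen : ∀ m, m + 1 ≤ n₀ → 2*lJ + 4*(δ+1) + 2 ≤ (wordDist S (y m) (y (m+1)) : ℝ) := by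
      intro m hm
      rw [hdstep m (by omega)]
      exact hlong m (by omega)
    have hjoint : ∀ m, m + 2 ≤ n₀ → gromovProd S (y m) (y (m+2)) (y (m+1)) ≤ lJ := by
      intro m hm
      have hm1 : m + 1 < n₀ := by omega
      have hm0 : m < n₀ := by omega
      have hinv : gromovProd S (y m) (y (m+2)) (y (m+1))
          = gromovProd S (l₀[m])⁻¹ (l₀[m+1]) 1 := by
        have hli := gp_left_invariant S (y (m+1)) (l₀[m])⁻¹ (l₀[m+1]) 1
        rw [← hli]
        congr 1
        · rw [hystep m hm0]; group
        · exact hystep (m+1) hm1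
        · exact (mul_one _).symm
      rw [hinv, hlJdef]
      apply joint_bound S hS hδ hhyp hε A B hA hB hr₂0 hgmrs
      · have hx := hmem l₀[m] (List.getElem_mem hm0)
        have hy' := hmem l₀[m+1] (List.getElem_mem hm1)
        have hnAA := (halt m hm1).1
        have hnBB := (halt m hm1).2
        rcases hx with hx | hx
        · rcases hy' with hy' | hy'
          · exact absurd ⟨hx, hy'⟩ hnAA
          · exact Or.inl ⟨hA'A hx, hB'B hy'⟩
        · rcases hy' with hy' | hy'
          · exact Or.inr ⟨hB'B hx, hA'A hy'⟩
          · exact absurd ⟨hx, hy'⟩ hnBB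
      · intro k hkA hkB
        have hk' : k ∈ A' ⊓ B' := by rw [hKeq]; exact ⟨hkA, hkB⟩
        have := hkmin m hm1 k hk'
        exact_mod_cast this
    have hgeo : IsGeodesic S (y 0) (y n₀) p' := by rw [hy0, hyn]; exact hp'g
    have hi' : i ≤ wordDist S (y 0) (y n₀) := by rw [hy0, hyn, ← hduv]; exact hi
    obtain ⟨m, hmn, r, hr, j, hj, hdist⟩ :=
      tracking S hS hδ hhyp hlJ0 y n₀ (by omega) hlen hjoint hgeo i hi'
    have hm0 : m < n₀ := by omega
    have hxm := hmem l₀[m] (List.getElem_mem hm0)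
    have hymH : y m ∈ A' ⊔ B' := by
      apply Subgroup.list_prod_mem
      intro x hx
      rcases hmem x (List.mem_of_mem_take hx) with hx' | hx'
      · exact (le_sup_left : A' ≤ A' ⊔ B') hx'
      · exact (le_sup_right : B' ≤ A' ⊔ B') hx'
    set r' : ℕ → G := fun s => (y m)⁻¹ * r s with hr'def
    have hd1x : wordDist S 1 l₀[m] = wordDist S (y m) (y (m+1)) := by
      rw [hdstep m hm0, wordDist_one_left]
    have hr'g : IsGeodesic S 1 l₀[m] r' := by
      obtain ⟨h1, h2, h3⟩ := hr
      refine ⟨by simp [hr'def, h1], ?_, ?_⟩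
      · show (y m)⁻¹ * r (wordDist S 1 l₀[m]) = l₀[m]
        rw [hd1x, h2, hystep m hm0]
        group
      · intro a b hab hb
        show wordDist S ((y m)⁻¹ * r a) ((y m)⁻¹ * r b) = b - a
        rw [wordDist_left]
        exact h3 a b hab (by rw [← hd1x]; exact hb)
    have hjx : j ≤ wordDist S 1 l₀[m] := by rw [hd1x]; exact hj
    have hrj : r j = y m * r' j := by simp [hr'def]
    have htri : (wordDist S (p' i) (y m * r' j) : ℝ) ≤
        (wordDist S (p' i) (r j) : ℝ) + (wordDist S (r j) (y m * r' j) : ℝ) := by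
      exact_mod_cast wordDist_triangle S hS (p' i) (r j) (y m * r' j)
    rcases hxm with hx | hx
    · obtain ⟨q₀, hq₀m, hq₀d⟩ := hQA' 1 (one_mem A') l₀[m] hx r' hr'g j hjx
      refine ⟨y m * q₀, mul_mem hymH ((le_sup_left : A' ≤ A' ⊔ B') hq₀m), ?_⟩
      have hseg : (wordDist S (r j) (y m * q₀) : ℝ) ≤ εa := by
        rw [hrj, wordDist_left]
        exact hq₀d
      have htri2 : (wordDist S (p' i) (y m * q₀) : ℝ) ≤
          (wordDist S (p' i) (r j) : ℝ) + (wordDist S (r j) (y m * q₀) : ℝ) := by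
        exact_mod_cast wordDist_triangle S hS (p' i) (r j) (y m * q₀)
      have : εa ≤ max εa εb := le_max_left _ _
      linarith
    · obtain ⟨q₀, hq₀m, hq₀d⟩ := hQB' 1 (one_mem B') l₀[m] hx r' hr'g j hjx
      refine ⟨y m * q₀, mul_mem hymH ((le_sup_right : B' ≤ A' ⊔ B') hq₀m), ?_⟩
      have hseg : (wordDist S (r j) (y m * q₀) : ℝ) ≤ εb := by
        rw [hrj, wordDist_left]
        exact hq₀d
      have htri2 : (wordDist S (p' i) (y m * q₀) : ℝ) ≤
          (wordDist S (p' i) (r j) : ℝ) + (wordDist S (r j) (y m * q₀) : ℝ) := by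
        exact_mod_cast wordDist_triangle S hS (p' i) (r j) (y m * q₀)
      have : εb ≤ max εa εb := le_max_right _ _
      linarith
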